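/- arXiv:2106.06525 — 5 statements merged into one kernel-verified Lean document; each statement's English description precedes it below -/
import Mathlib

section
/- For all real u in the closed interval [0,1], the function f(u) = log₂((2+u)/(1+u)) + log₂((4+3u)/(3+3u)) − log₂((4+u)/(3+u)) satisfies f(u) < 1 − u/2, except at u = 0 where f(0) = 1. -/
noncomputable def ehllF (u : ℝ) : ℝ :=
  Real.logb 2 ((2 + u) / (1 + u)) + Real.logb 2 ((4 + 3 * u) / (3 + 3 * u))
    - Real.logb 2 ((4 + u) / (3 + u))

theorem ehllF_lt_one_sub_half (u : ℝ) (hu : u ∈ Set.Icc (0 : ℝ) 1) :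
    (u = 0 → ehllF u = 1) ∧ (u ≠ 0 → ehllF u < 1 - u / 2) := by
  obtain ⟨hu0, hu1⟩ := hu
  constructor
  · rintro rfl
    norm_num [ehllF, Real.logb_self_eq_one]
  · intro hne
    have hpos : 0 < u := hu0.lt_of_ne (Ne.symm hne)
    have hlog2 : (0:ℝ) < Real.log 2 := Real.log_pos one_lt_two
    have hl2 : Real.log 2 < 0.6931471808 := Real.log_two_lt_d9
    have h1 : (0:ℝ) < 1 + u := by linarith
    have h2 : (0:ℝ) < 2 + u := by linarith
    have h3 : (0:ℝ) < 3 + u := by linarith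
    have h4 : (0:ℝ) < 4 + u := by linarith
    have h5 : (0:ℝ) < 3 + 3*u := by linarith
    have h6 : (0:ℝ) < 4 + 3*u := by linarith
    set z := u/2 * Real.log 2 with hz
    have hz0 : 0 ≤ z := by positivity
    have hzu : z ≤ 0.3466 * u := by
      have : u/2 * Real.log 2 ≤ u/2 * 0.6931471808 := by
        apply mul_le_mul_of_nonneg_left hl2.le (by linarith)
      nlinarith
    have hz1 : z ≤ 1 := by nlinarith
    have hexp : Real.exp z ≤ 1 + z + z^2/2 + (2/9)*z^3 := by
      have h := Real.exp_bound' hz0 hz1 (n := 3) (by norm_num)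
      norm_num [Finset.sum_range_succ, Nat.factorial] at h
      nlinarith [h]
    have hQ : Real.exp z ≤ 1 + 0.3466*u + (0.3466*u)^2/2 + (2/9)*(0.3466*u)^3 := by
      nlinarith [hexp, hzu, hz0, sq_nonneg z, sq_nonneg (0.3466*u),
        mul_nonneg hz0 (sub_nonneg.2 hzu), mul_nonneg (mul_nonneg hz0 hz0) (sub_nonneg.2 hzu),
        mul_nonneg (mul_nonneg hz0 (le_trans hz0 hzu)) (sub_nonneg.2 hzu)]
    set A := (2+u)*((4+3*u)*(3+u)) with hA
    set B := (1+u)*((3+3*u)*(4+u)) with hB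
    have hAp : 0 < A := by positivity
    have hBp : 0 < B := by positivity
    have key : A * Real.exp z < 2 * B := by
      have h7 : A * Real.exp z ≤ A * (1 + 0.3466*u + (0.3466*u)^2/2 + (2/9)*(0.3466*u)^3) :=
        mul_le_mul_of_nonneg_left hQ hAp.le
      have h8 : A * (1 + 0.3466*u + (0.3466*u)^2/2 + (2/9)*(0.3466*u)^3) < 2 * B := by
        rw [hA, hB]
        nlinarith [hpos, hu1, mul_pos hpos hpos, sq_nonneg (1-u), sq_nonneg u,
          mul_nonneg hpos.le (sub_nonneg.2 hu1), mul_nonneg (mul_nonneg hpos.le hpos.le) (sub_nonneg.2 hu1),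
          mul_nonneg (mul_nonneg (mul_nonneg hpos.le hpos.le) hpos.le) (sub_nonneg.2 hu1),
          mul_nonneg (mul_nonneg (mul_nonneg (mul_nonneg hpos.le hpos.le) hpos.le) hpos.le) (sub_nonneg.2 hu1),
          mul_nonneg (mul_nonneg (mul_nonneg (mul_nonneg (mul_nonneg hpos.le hpos.le) hpos.le) hpos.le) hpos.le) (sub_nonneg.2 hu1)]
      exact lt_of_le_of_lt h7 h8
    have hlogs : Real.log A + z < Real.log 2 + Real.log B := by
      have h9 : Real.log (A * Real.exp z) < Real.log (2 * B) :=
        Real.log_lt_log (by positivity) key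
      rwa [Real.log_mul hAp.ne' (Real.exp_pos z).ne', Real.log_exp,
        Real.log_mul two_ne_zero hBp.ne'] at h9
    have hf : ehllF u = (Real.log A - Real.log B) / Real.log 2 := by
      rw [ehllF, Real.logb, Real.logb, Real.logb, hA, hB,
        Real.log_div h2.ne' h1.ne', Real.log_div h6.ne' h5.ne', Real.log_div h4.ne' h3.ne',
        Real.log_mul h2.ne' (by positivity), Real.log_mul h6.ne' h3.ne',
        Real.log_mul h1.ne' (by positivity), Real.log_mul h5.ne' h4.ne']
      ring
    rw [hf, div_lt_iff₀ hlog2]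
    have : z = u/2 * Real.log 2 := hz
    nlinarith [hlogs]
end

section
/- For all real u ≥ 1, the function f(u) = log₂((2+u)/(1+u)) + log₂((4+3u)/(3+3u)) − log₂((4+u)/(3+u)) satisfies f(u) < 1/(1+u). -/
open Real

theorem Real.log_div_lt_sq_sub_sq_div {a b : ℝ} (hb : 0 < b) (hab : b < a) :
    log (a / b) < (a ^ 2 - b ^ 2) / (2 * a * b) := by
  have ha : 0 < a := hb.trans hab
  calc log (a / b) < sinh (log (a / b)) :=
        self_lt_sinh_iff.2 (log_pos ((one_lt_div hb).2 hab))
    _ = (a ^ 2 - b ^ 2) / (2 * a * b) := by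
      rw [sinh_log (by positivity)]
      field_simp

def ehllNum (u : ℝ) : ℝ := (2 + u) * (4 + 3 * u) * (3 + u)

def ehllDen (u : ℝ) : ℝ := (1 + u) * (3 + 3 * u) * (4 + u)

section

variable {u : ℝ}

lemma ehllDen_pos (hu : -1 < u) : 0 < ehllDen u := by
  have h1 : 0 < 1 + u := by linarith
  have h3 : 0 < 3 + 3 * u := by linarith
  have h4 : 0 < 4 + u := by linarith
  unfold ehllDen
  positivity

lemma ehllDen_lt_ehllNum (hu : -1 < u) : ehllDen u < ehllNum u := by
  unfold ehllDen ehllNum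
  nlinarith

lemma ehllF_eq_logb (hu : -1 < u) : ehllF u = logb 2 (ehllNum u / ehllDen u) := by
  have h1 : 0 < 1 + u := by linarith
  have h2 : 0 < 2 + u := by linarith
  have h3 : 0 < 3 + u := by linarith
  have h4 : 0 < 4 + u := by linarith
  have h3' : 0 < 3 + 3 * u := by linarith
  have h4' : 0 < 4 + 3 * u := by linarith
  rw [ehllF, ← logb_mul (div_pos h2 h1).ne' (div_pos h4' h3').ne',
    ← logb_div (by positivity) (div_pos h4 h3).ne']
  congr 1
  unfold ehllNum ehllDen
  field_simp

/-- In `t = u - 1` the difference of the two sides is a polynomial with nonnegative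
coefficients. -/
lemma ehll_sq_sub_sq_mul_one_add_le (hu : 1 ≤ u) :
    (ehllNum u ^ 2 - ehllDen u ^ 2) * (1 + u) ≤ 69 / 50 * (ehllNum u * ehllDen u) := by
  obtain ⟨t, ht, rfl⟩ : ∃ t, 0 ≤ t ∧ u = 1 + t := ⟨u - 1, by linarith, by ring⟩
  unfold ehllNum ehllDen
  nlinarith [pow_nonneg ht 2, pow_nonneg ht 3, pow_nonneg ht 4, pow_nonneg ht 5, pow_nonneg ht 6]

end

theorem ehllF_lt_inv_one_add (u : ℝ) (hu : 1 ≤ u) : ehllF u < 1 / (1 + u) := by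
  have hu' : -1 < u := by linarith
  have hB := ehllDen_pos hu'
  have hBA := ehllDen_lt_ehllNum hu'
  have hA := hB.trans hBA
  have hlog2 : (69 / 100 : ℝ) < log 2 := lt_trans (by norm_num) log_two_gt_d9
  rw [ehllF_eq_logb hu', logb, div_lt_iff₀ (by positivity)]
  calc log (ehllNum u / ehllDen u)
      < (ehllNum u ^ 2 - ehllDen u ^ 2) / (2 * ehllNum u * ehllDen u) :=
        log_div_lt_sq_sub_sq_div hB hBA
    _ ≤ 69 / 100 / (1 + u) := by
        rw [div_le_div_iff₀ (by positivity) (by linarith)]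
        linarith [ehll_sq_sub_sq_mul_one_add_le hu]
    _ < 1 / (1 + u) * log 2 := by
        rw [one_div_mul_eq_div]
        gcongr
end

section
/- The function f(u) = log₂((2+u)/(1+u)) + log₂((4+3u)/(3+3u)) − log₂((4+u)/(3+u)) satisfies f(0) = 1, f is strictly decreasing on [0,∞), and f(u) → 0 as u → ∞. -/
open Real Filter Topology Set

noncomputable def ehllRatio (u : ℝ) : ℝ :=
  (2 + u) * (4 + 3 * u) * (3 + u) / ((1 + u) * (3 + 3 * u) * (4 + u))

private lemma factors_pos {u : ℝ} (hu : -1 < u) :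
    0 < 1 + u ∧ 0 < 2 + u ∧ 0 < 3 + u ∧ 0 < 4 + u ∧ 0 < 3 + 3 * u ∧ 0 < 4 + 3 * u := by
  refine ⟨?_, ?_, ?_, ?_, ?_, ?_⟩ <;> linarith

lemma ehllRatio_pos {u : ℝ} (hu : -1 < u) : 0 < ehllRatio u := by
  obtain ⟨h1, h2, h3, h4, h3', h4'⟩ := factors_pos hu
  rw [ehllRatio]
  positivity

lemma ehllF_eq_logb_ehllRatio {u : ℝ} (hu : -1 < u) :
    ehllF u = logb 2 (ehllRatio u) := by
  obtain ⟨h1, h2, h3, h4, h3', h4'⟩ := factors_pos hu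
  have hsplit : ehllRatio u =
      (2 + u) / (1 + u) * ((4 + 3 * u) / (3 + 3 * u)) / ((4 + u) / (3 + u)) := by
    rw [ehllRatio]
    field_simp
  rw [hsplit, logb_div (by positivity) (by positivity), logb_mul (by positivity) (by positivity),
    ehllF]

lemma ehllRatio_strictAntiOn : StrictAntiOn ehllRatio (Ici 0) := by
  intro a (ha : 0 ≤ a) b (hb : 0 ≤ b) hab
  rw [ehllRatio, ehllRatio, div_lt_div_iff₀ (by positivity) (by positivity)]
  have hfactor : (2 + a) * (4 + 3 * a) * (3 + a) * ((1 + b) * (3 + 3 * b) * (4 + b)) -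
      (2 + b) * (4 + 3 * b) * (3 + b) * ((1 + a) * (3 + 3 * a) * (4 + a)) =
      (b - a) * (192 + 204 * (a + b) + 36 * (a ^ 2 + a * b + b ^ 2) + 171 * (a * b)
        + 33 * (a * b * (a + b)) + 3 * (a ^ 2 * b ^ 2)) := by ring
  have hpos : 0 < (b - a) * (192 + 204 * (a + b) + 36 * (a ^ 2 + a * b + b ^ 2)
      + 171 * (a * b) + 33 * (a * b * (a + b)) + 3 * (a ^ 2 * b ^ 2)) :=
    mul_pos (sub_pos.2 hab) (by positivity)
  linarith

lemma tendsto_affine_div_affine_atTop (a b : ℝ) {c : ℝ} (hc : 0 < c) :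
    Tendsto (fun u => (a + c * u) / (b + c * u)) atTop (𝓝 1) := by
  have hden : Tendsto (fun u => b + c * u) atTop atTop :=
    tendsto_atTop_add_const_left _ b (tendsto_id.const_mul_atTop hc)
  have hlim : Tendsto (fun u => 1 + (a - b) / (b + c * u)) atTop (𝓝 1) := by
    simpa using tendsto_const_nhds.add (tendsto_const_nhds.div_atTop hden)
  refine hlim.congr' ?_
  filter_upwards [hden.eventually_gt_atTop 0] with u hu
  field_simp
  ring

lemma tendsto_logb_affine_div_affine_atTop (β a b : ℝ) {c : ℝ} (hc : 0 < c) :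
    Tendsto (fun u => logb β ((a + c * u) / (b + c * u))) atTop (𝓝 0) := by
  have h := (continuousAt_logb (b := β) one_ne_zero).tendsto.comp
    (tendsto_affine_div_affine_atTop a b hc)
  rwa [logb_one] at h

theorem ehllF_properties :
    ehllF 0 = 1 ∧ StrictAntiOn ehllF (Set.Ici (0 : ℝ)) ∧
      Filter.Tendsto ehllF Filter.atTop (nhds 0) := by
  refine ⟨by norm_num [ehllF], ?_, ?_⟩
  · intro a (ha : 0 ≤ a) b (hb : 0 ≤ b) hab
    rw [ehllF_eq_logb_ehllRatio (by linarith), ehllF_eq_logb_ehllRatio (by linarith)]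
    exact logb_lt_logb one_lt_two (ehllRatio_pos (by linarith)) (ehllRatio_strictAntiOn ha hb hab)
  · have h := ((tendsto_logb_affine_div_affine_atTop 2 2 1 one_pos).add
      (tendsto_logb_affine_div_affine_atTop 2 4 3 three_pos)).sub
      (tendsto_logb_affine_div_affine_atTop 2 4 3 one_pos)
    simp only [one_mul, add_zero, sub_zero] at h
    exact h
end

section
/- Fix real x > 1 with (2x)^{1/2} > 4. Then the function f(k) = e^{−3x/2^k}·(e^{2x/2^{2k}} − 1) is monotonically increasing in k on the interval [1, (1/2)·log₂(2x)]. -/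
open Real

private lemma key_ineq (x u : ℝ) (hx : 8 < x) (hu : 2 ≤ u) (hu2 : u ^ 2 ≤ 2 * x) :
    4 * Real.exp (2 * x / u ^ 2) ≤ 3 * u * (Real.exp (2 * x / u ^ 2) - 1) := by
  have hu0 : (0 : ℝ) < u := by linarith
  set v : ℝ := 2 * x / u ^ 2 with hv
  have hE : v + 1 ≤ Real.exp v := Real.add_one_le_exp v
  -- quadratic inequality: (3u - 4) * v ≥ 4, i.e. (3u-4)*2x ≥ 4u²
  have hq : 4 * u ^ 2 ≤ (3 * u - 4) * (2 * x) := by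
    rcases le_total u (8 / 3) with h | h
    · nlinarith [mul_nonneg (sub_nonneg.2 hu) (sub_nonneg.2 h)]
    · nlinarith [mul_nonneg (by linarith : (0:ℝ) ≤ 3 * u - 8) (by linarith : (0:ℝ) ≤ 2 * x - u ^ 2)]
  have hv4 : 4 ≤ (3 * u - 4) * v := by
    have hrw : (3 * u - 4) * v = ((3 * u - 4) * (2 * x)) / u ^ 2 := by rw [hv]; ring
    rw [hrw, le_div_iff₀ (by positivity)]
    nlinarith
  nlinarith [Real.exp_pos v]

private lemma hasDeriv_aux (x k : ℝ) :
    HasDerivAt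
      (fun k : ℝ =>
        Real.exp (-3 * x / (2 : ℝ) ^ k) * (Real.exp (2 * x / (2 : ℝ) ^ (2 * k)) - 1))
      ((Real.exp (-3 * x / (2 : ℝ) ^ k) *
          ((0 * (2:ℝ)^k - (-3 * x) * ((2:ℝ)^k * Real.log 2)) / ((2:ℝ)^k) ^ 2)) *
          (Real.exp (2 * x / (2 : ℝ) ^ (2 * k)) - 1)
        + Real.exp (-3 * x / (2 : ℝ) ^ k) *
          (Real.exp (2 * x / (2 : ℝ) ^ (2 * k)) *
            ((0 * (2:ℝ)^(2*k) - (2 * x) * ((2:ℝ)^(2*k) * Real.log 2 * 2)) / ((2:ℝ)^(2*k)) ^ 2))) k := by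
  have h1 : HasDerivAt (fun k : ℝ => (2:ℝ) ^ k) ((2:ℝ)^k * Real.log 2) k :=
    (Real.hasStrictDerivAt_const_rpow two_pos k).hasDerivAt
  have h2 : HasDerivAt (fun k : ℝ => (2:ℝ) ^ (2 * k)) ((2:ℝ)^(2*k) * Real.log 2 * 2) k := by
    have := ((Real.hasStrictDerivAt_const_rpow two_pos (2 * k)).hasDerivAt).comp k
      ((hasDerivAt_id k).const_mul 2)
    simpa [Function.comp_def] using this
  have hA : HasDerivAt (fun k : ℝ => -3 * x / (2:ℝ) ^ k)
      ((0 * (2:ℝ)^k - (-3 * x) * ((2:ℝ)^k * Real.log 2)) / ((2:ℝ)^k) ^ 2) k :=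
    (hasDerivAt_const k (-3 * x)).div h1 (ne_of_gt (Real.rpow_pos_of_pos two_pos k))
  have hB : HasDerivAt (fun k : ℝ => 2 * x / (2:ℝ) ^ (2 * k))
      ((0 * (2:ℝ)^(2*k) - (2 * x) * ((2:ℝ)^(2*k) * Real.log 2 * 2)) / ((2:ℝ)^(2*k)) ^ 2) k :=
    (hasDerivAt_const k (2 * x)).div h2 (ne_of_gt (Real.rpow_pos_of_pos two_pos (2 * k)))
  exact hA.exp.mul (hB.exp.sub_const 1)

theorem lemma_A1_monotone (x : ℝ) (hx : 1 < x) (hx4 : Real.sqrt (2 * x) > 4) :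
    MonotoneOn
      (fun k : ℝ =>
        Real.exp (-3 * x / (2 : ℝ) ^ k) * (Real.exp (2 * x / (2 : ℝ) ^ (2 * k)) - 1))
      (Set.Icc 1 (Real.logb 2 (2 * x) / 2)) := by
  have hx8 : 8 < x := by
    nlinarith [Real.sq_sqrt (by linarith : (0:ℝ) ≤ 2 * x), Real.sqrt_nonneg (2 * x)]
  apply monotoneOn_of_deriv_nonneg (convex_Icc _ _)
  · exact fun k _ => ((hasDeriv_aux x k).differentiableAt.continuousAt).continuousWithinAt
  · exact fun k _ => (hasDeriv_aux x k).differentiableAt.differentiableWithinAt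
  · intro k hk
    rw [interior_Icc, Set.mem_Ioo] at hk
    rw [(hasDeriv_aux x k).deriv]
    set u : ℝ := (2:ℝ) ^ k with hu
    have hu0 : 0 < u := Real.rpow_pos_of_pos two_pos k
    have huk : (2:ℝ) ^ (2 * k) = u ^ 2 := by
      rw [hu, ← Real.rpow_natCast ((2:ℝ)^k) 2, ← Real.rpow_mul (by norm_num) k]
      norm_num [mul_comm]
    have hu2 : 2 ≤ u := by
      calc (2:ℝ) = (2:ℝ) ^ (1:ℝ) := by norm_num
      _ ≤ u := Real.rpow_le_rpow_left_iff one_lt_two |>.2 hk.1.le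
    have huB : u ^ 2 ≤ 2 * x := by
      rw [← huk]
      calc (2:ℝ) ^ (2 * k) ≤ (2:ℝ) ^ Real.logb 2 (2 * x) :=
        Real.rpow_le_rpow_left_iff one_lt_two |>.2 (by linarith [hk.2])
      _ = 2 * x := Real.rpow_logb two_pos (by norm_num) (by linarith)
    rw [huk]
    have hkey := key_ineq x u hx8 hu2 huB
    set E : ℝ := Real.exp (2 * x / u ^ 2) with hE
    have hL : 0 < Real.log 2 := Real.log_pos one_lt_two
    have hexpA : 0 < Real.exp (-3 * x / u) := Real.exp_pos _
    have heq : Real.exp (-3 * x / u) * ((0 * u - (-3 * x) * (u * Real.log 2)) / u ^ 2) * (E - 1)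
        + Real.exp (-3 * x / u) * (E * ((0 * u^2 - (2 * x) * (u^2 * Real.log 2 * 2)) / (u^2) ^ 2))
        = Real.exp (-3 * x / u) * (x * Real.log 2 / u ^ 2) * (3 * u * (E - 1) - 4 * E) := by
      field_simp
      ring
    rw [heq]
    have : 0 ≤ 3 * u * (E - 1) - 4 * E := by linarith
    positivity
end

section
/- For real s with Re(s) ≥ 0 and real u > 0, |(3+u)^{−s−2} − (3+3u)^{−s−2}| ≤ |s+2| · ( (3+u)^{−2} − (3+3u)^{−2} ). -/
/-!
Write the difference as `-∫ₐᵇ c x^(c-1) dx` with `c = -s-2`, `a = 3+u`, `b = 3+3u`. On `[a, b]` we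
have `x ≥ 1` and `Re(c) - 1 ≤ -3`, so the integrand has norm at most `|s+2| x⁻³`, whose integral is
`|s+2| (a⁻² - b⁻²) / 2`.
-/

open intervalIntegral Complex Set

theorem norm_ofReal_cpow_sub_ofReal_cpow_le {a b : ℝ} (ha : 0 < a) (hab : a ≤ b) (c : ℂ) :
    ‖(a : ℂ) ^ c - (b : ℂ) ^ c‖ ≤ ‖c‖ * ∫ x in a..b, x ^ (c.re - 1) := by
  have hpos : ∀ x ∈ uIcc a b, 0 < x := fun x hx => ha.trans_le (uIcc_of_le hab ▸ hx).1
  have hderiv : ∀ x ∈ uIcc a b,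
      HasDerivAt (fun y : ℝ => (y : ℂ) ^ c) (c * (x : ℂ) ^ (c - 1)) x := fun x hx =>
    (hasStrictDerivAt_cpow_const (ofReal_mem_slitPlane.2 (hpos x hx))).hasDerivAt.comp_ofReal
  have hcont : ContinuousOn (fun x : ℝ => c * (x : ℂ) ^ (c - 1)) (uIcc a b) :=
    continuousOn_const.mul fun x hx =>
      (continuousAt_ofReal_cpow_const x _ (Or.inr (hpos x hx).ne')).continuousWithinAt
  have hnorm : EqOn (fun x : ℝ => ‖c * (x : ℂ) ^ (c - 1)‖) (fun x => ‖c‖ * x ^ (c.re - 1))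
      (uIcc a b) := fun x hx => by
    simp only [norm_mul, norm_cpow_eq_rpow_re_of_pos (hpos x hx), sub_re, one_re]
  calc ‖(a : ℂ) ^ c - (b : ℂ) ^ c‖ = ‖∫ x in a..b, c * (x : ℂ) ^ (c - 1)‖ := by
        rw [integral_eq_sub_of_hasDerivAt hderiv hcont.intervalIntegrable, ← norm_neg, neg_sub]
    _ ≤ ∫ x in a..b, ‖c * (x : ℂ) ^ (c - 1)‖ := norm_integral_le_integral_norm hab
    _ = ‖c‖ * ∫ x in a..b, x ^ (c.re - 1) := by rw [integral_congr hnorm, integral_const_mul]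

theorem integral_rpow_le_integral_rpow_of_le {a b r t : ℝ} (ha : 1 ≤ a) (hab : a ≤ b)
    (hrt : r ≤ t) :
    ∫ x in a..b, x ^ r ≤ ∫ x in a..b, x ^ t := by
  have hpos : ∀ x ∈ uIcc a b, x ≠ 0 := fun x hx =>
    (zero_lt_one.trans_le (ha.trans (uIcc_of_le hab ▸ hx).1)).ne'
  have hint (p : ℝ) : IntervalIntegrable (fun x : ℝ => x ^ p) MeasureTheory.volume a b :=
    (continuousOn_id.rpow_const fun x hx => Or.inl (hpos x hx)).intervalIntegrable
  exact integral_mono_on hab (hint r) (hint t) fun x hx =>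
    Real.rpow_le_rpow_of_exponent_le (ha.trans hx.1) hrt

theorem integral_rpow_neg_three {a b : ℝ} (ha : 0 < a) (hab : a ≤ b) :
    ∫ x in a..b, x ^ (-3 : ℝ) = (a ^ (-2 : ℤ) - b ^ (-2 : ℤ)) / 2 := by
  have h0 : (0 : ℝ) ∉ uIcc a b := fun h => (ha.trans_le (uIcc_of_le hab ▸ h).1).false
  rw [integral_rpow (Or.inr ⟨by norm_num, h0⟩),
    show (-3 : ℝ) + 1 = ((-2 : ℤ) : ℝ) by norm_num, Real.rpow_intCast, Real.rpow_intCast]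
  push_cast
  ring

theorem cpow_diff_bound (s : ℂ) (hs : 0 ≤ s.re) (u : ℝ) (hu : 0 < u) :
    ‖((3 + u : ℝ) : ℂ) ^ (-s - 2) - ((3 + 3 * u : ℝ) : ℂ) ^ (-s - 2)‖ ≤
      ‖s + 2‖ * ((3 + u) ^ (-2 : ℤ) - (3 + 3 * u) ^ (-2 : ℤ)) := by
  have hab : 3 + u ≤ 3 + 3 * u := by linarith
  have hgap : 0 ≤ (3 + u) ^ (-2 : ℤ) - (3 + 3 * u) ^ (-2 : ℤ) := by
    rw [sub_nonneg, zpow_neg, zpow_neg]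
    gcongr
    exact zpow_le_zpow_left₀ (by norm_num) (by linarith) hab
  calc _ ≤ ‖-s - 2‖ * ∫ x in (3 + u)..(3 + 3 * u), x ^ ((-s - 2).re - 1) :=
        norm_ofReal_cpow_sub_ofReal_cpow_le (by linarith) hab _
    _ ≤ ‖s + 2‖ * ∫ x in (3 + u)..(3 + 3 * u), x ^ (-3 : ℝ) := by
        rw [show -s - 2 = -(s + 2) by ring, norm_neg]
        gcongr
        refine integral_rpow_le_integral_rpow_of_le (by linarith) hab ?_
        simp only [neg_re, add_re, re_ofNat]
        linarith
    _ = ‖s + 2‖ * (((3 + u) ^ (-2 : ℤ) - (3 + 3 * u) ^ (-2 : ℤ)) / 2) := by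
        rw [integral_rpow_neg_three (by linarith) hab]
    _ ≤ ‖s + 2‖ * ((3 + u) ^ (-2 : ℤ) - (3 + 3 * u) ^ (-2 : ℤ)) := by
        gcongr; linarith
end
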